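/- arXiv:0810.2154 — 2 statements merged into one kernel-verified Lean document; each statement's English description precedes it below -/
import Mathlib

section
/- Let ‖·‖* be a Barabanov norm for the irreducible matrix set 𝒜, let N be any norm on ℝ^m, let γ > 0, and define the norm N′ by N′(x) = max{N(x), γ^{-1} max_{1≤i≤r} N(A_i x)}. Then e⁺(N′, ‖·‖*) ≤ e⁺(N, ‖·‖*) · max{1, γ^{-1} ρ(𝒜)} and e⁻(N′, ‖·‖*) ≥ e⁻(N, ‖·‖*) · max{1, γ^{-1} ρ(𝒜)}; consequently ecc(N′, ‖·‖*) ≤ ecc(N, ‖·‖*). -/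
open Matrix Filter Topology Bornology Pointwise

/-- `N` is a norm on `ℝ^m`: nonnegative, definite, absolutely homogeneous, subadditive. -/
def IsNorm {m : ℕ} (N : (Fin m → ℝ) → ℝ) : Prop :=
  (∀ x, 0 ≤ N x) ∧ (∀ x, N x = 0 → x = 0) ∧
    (∀ (t : ℝ) (x), N (t • x) = |t| * N x) ∧ (∀ x y, N (x + y) ≤ N x + N y)

/-- `N` is a seminorm on `ℝ^m`. -/
def IsSeminorm {m : ℕ} (N : (Fin m → ℝ) → ℝ) : Prop :=
  (∀ x, 0 ≤ N x) ∧
    (∀ (t : ℝ) (x), N (t • x) = |t| * N x) ∧ (∀ x y, N (x + y) ≤ N x + N y)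

/-- The family `A` is irreducible: the matrices have no common invariant subspace
other than `⊥` and `⊤`. -/
def IsIrreducibleFamily {m r : ℕ} (A : Fin r → Matrix (Fin m) (Fin m) ℝ) : Prop :=
  ∀ W : Submodule ℝ (Fin m → ℝ), (∀ i, ∀ x ∈ W, (A i).mulVec x ∈ W) → W = ⊥ ∨ W = ⊤

/-- The operator norm of a matrix acting on `ℝ^m` (with its sup norm). -/
noncomputable def matNorm {m : ℕ} (M : Matrix (Fin m) (Fin m) ℝ) : ℝ :=
  ‖LinearMap.toContinuousLinearMap M.mulVecLin‖

/-- The joint spectral radius of the family `A`: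
`limsup_n (max over words of length n of the norm of the product)^(1/n)`. -/
noncomputable def jsr {m r : ℕ} (A : Fin r → Matrix (Fin m) (Fin m) ℝ) : ℝ :=
  Filter.atTop.limsup fun n : ℕ =>
    (⨆ w : Fin n → Fin r, matNorm (List.ofFn fun k => A (w k)).prod) ^ (1 / (n : ℝ))

/-- `maxA A N x = max_i N (A_i x)`. -/
noncomputable def maxA {m r : ℕ} (A : Fin r → Matrix (Fin m) (Fin m) ℝ)
    (N : (Fin m → ℝ) → ℝ) (x : Fin m → ℝ) : ℝ :=
  ⨆ i, N ((A i).mulVec x)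

/-- `ρ⁺ = max_{x ≠ 0} (max_i N (A_i x)) / N x`. -/
noncomputable def rhoSup {m r : ℕ} (A : Fin r → Matrix (Fin m) (Fin m) ℝ)
    (N : (Fin m → ℝ) → ℝ) : ℝ :=
  sSup ((fun x => maxA A N x / N x) '' {x | x ≠ 0})

/-- `ρ⁻ = min_{x ≠ 0} (max_i N (A_i x)) / N x`. -/
noncomputable def rhoInf {m r : ℕ} (A : Fin r → Matrix (Fin m) (Fin m) ℝ)
    (N : (Fin m → ℝ) → ℝ) : ℝ :=
  sInf ((fun x => maxA A N x / N x) '' {x | x ≠ 0})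

/-- An averaging function: continuous on positives, `γ t t = t`, and strictly
between `min` and `max` off the diagonal. -/
def IsAveraging (γ : ℝ → ℝ → ℝ) : Prop :=
  ContinuousOn (fun p : ℝ × ℝ => γ p.1 p.2) {p | 0 < p.1 ∧ 0 < p.2} ∧
    (∀ t, 0 < t → γ t t = t) ∧
    ∀ t s, 0 < t → 0 < s → t ≠ s → min t s < γ t s ∧ γ t s < max t s

/-- The max-relaxation iteration: `‖x‖_{n+1} = max (‖x‖_n, γ_n⁻¹ max_i ‖A_i x‖_n)`
where `γ_n = γ (ρ⁻_n, ρ⁺_n)`. -/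
noncomputable def iterN {m r : ℕ} (A : Fin r → Matrix (Fin m) (Fin m) ℝ)
    (γ : ℝ → ℝ → ℝ) (N0 : (Fin m → ℝ) → ℝ) : ℕ → (Fin m → ℝ) → ℝ
  | 0 => N0
  | n + 1 => fun x =>
      max (iterN A γ N0 n x)
        ((γ (rhoInf A (iterN A γ N0 n)) (rhoSup A (iterN A γ N0 n)))⁻¹ *
          maxA A (iterN A γ N0 n) x)

/-- The normalized norms `‖x‖°_n = ‖x‖_n / ‖e‖_n` of the max-relaxation iteration
(for `n = 0` this equals `‖x‖_0` since `‖e‖_0 = 1`). -/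
noncomputable def iterNnorm {m r : ℕ} (A : Fin r → Matrix (Fin m) (Fin m) ℝ)
    (γ : ℝ → ℝ → ℝ) (N0 : (Fin m → ℝ) → ℝ) (e : Fin m → ℝ) (n : ℕ) :
    (Fin m → ℝ) → ℝ :=
  fun x => iterN A γ N0 n x / iterN A γ N0 n e

/-- `e⁺(N, N') = max_{x ≠ 0} N x / N' x`. -/
noncomputable def ePlus {m : ℕ} (N N' : (Fin m → ℝ) → ℝ) : ℝ :=
  sSup ((fun x => N x / N' x) '' {x | x ≠ 0})

/-- `e⁻(N, N') = min_{x ≠ 0} N x / N' x`. -/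
noncomputable def eMinus {m : ℕ} (N N' : (Fin m → ℝ) → ℝ) : ℝ :=
  sInf ((fun x => N x / N' x) '' {x | x ≠ 0})

/-- The eccentricity of the norm `N` with respect to the norm `N'`. -/
noncomputable def ecc {m : ℕ} (N N' : (Fin m → ℝ) → ℝ) : ℝ :=
  ePlus N N' / eMinus N N'

/-!
The norm `N` is squeezed between `e⁻ ‖·‖*` and `e⁺ ‖·‖*`. Since `max_i ‖A_i x‖* = ρ ‖x‖*`,
the term `γ⁻¹ max_i N (A_i x)` is squeezed between `γ⁻¹ ρ e⁻ ‖x‖*` and `γ⁻¹ ρ e⁺ ‖x‖*`, so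
taking the maximum with `N x` multiplies both bounds by the same factor `max 1 (γ⁻¹ ρ)`,
which cancels in the eccentricity.
-/

namespace IsNorm

variable {m : ℕ} {N M : (Fin m → ℝ) → ℝ}

lemma map_zero (hN : IsNorm N) : N 0 = 0 := by
  simpa using hN.2.2.1 0 0

lemma pos (hN : IsNorm N) {x : Fin m → ℝ} (hx : x ≠ 0) : 0 < N x :=
  (hN.1 x).lt_of_ne fun h => hx (hN.2.1 x h.symm)

lemma exists_le_mul_norm (hN : IsNorm N) : ∃ C, 0 ≤ C ∧ ∀ x, N x ≤ C * ‖x‖ := by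
  refine ⟨∑ i, N (Pi.single i 1), Finset.sum_nonneg fun i _ => hN.1 _, fun x => ?_⟩
  calc N x = N (∑ i, x i • Pi.single i 1) := by simp [← Pi.single_smul', Finset.univ_sum_single]
    _ ≤ ∑ i, N (x i • Pi.single i 1) :=
        Finset.le_sum_of_subadditive N hN.map_zero.le hN.2.2.2 _ _
    _ = ∑ i, |x i| * N (Pi.single i 1) := by simp only [hN.2.2.1]
    _ ≤ ∑ i, ‖x‖ * N (Pi.single i 1) := by
        gcongr with i
        · exact hN.1 _
        · exact norm_le_pi_norm x i
    _ = (∑ i, N (Pi.single i 1)) * ‖x‖ := by rw [← Finset.mul_sum, mul_comm]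

lemma continuous (hN : IsNorm N) : Continuous N := by
  obtain ⟨C, hC0, hC⟩ := hN.exists_le_mul_norm
  have hsub : ∀ x y, N x - N y ≤ C * ‖x - y‖ := fun x y => by
    have := hN.2.2.2 (x - y) y
    rw [sub_add_cancel] at this
    linarith [hC (x - y)]
  refine (LipschitzWith.of_dist_le_mul (K := C.toNNReal) fun x y => ?_).continuous
  rw [Real.dist_eq, Real.coe_toNNReal C hC0, dist_eq_norm, abs_le]
  have := hsub y x
  rw [norm_sub_rev] at this
  constructor <;> linarith [hsub x y]

lemma exists_mul_norm_le (hN : IsNorm N) : ∃ c, 0 < c ∧ ∀ x, c * ‖x‖ ≤ N x := by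
  rcases isEmpty_or_nonempty (Fin m) with hm | hm
  · exact ⟨1, one_pos, fun x => by simpa [Subsingleton.elim x 0] using hN.1 0⟩
  obtain ⟨x₀, hx₀, hmin⟩ := (isCompact_sphere (0 : Fin m → ℝ) 1).exists_isMinOn
    (NormedSpace.sphere_nonempty.mpr zero_le_one) hN.continuous.continuousOn
  have hx₀0 : x₀ ≠ 0 := ne_zero_of_mem_unit_sphere ⟨x₀, hx₀⟩
  refine ⟨N x₀, hN.pos hx₀0, fun x => ?_⟩
  rcases eq_or_ne x 0 with rfl | hx
  · simp [hN.map_zero]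
  have hxn : 0 < ‖x‖ := norm_pos_iff.mpr hx
  have hmem : ‖x‖⁻¹ • x ∈ Metric.sphere (0 : Fin m → ℝ) 1 := by
    rw [mem_sphere_zero_iff_norm, norm_smul, norm_inv, norm_norm, inv_mul_cancel₀ hxn.ne']
  have h := hmin hmem
  rw [Set.mem_ofPred_eq, hN.2.2.1, abs_of_pos (inv_pos.mpr hxn), le_inv_mul_iff₀ hxn] at h
  linarith

end IsNorm

section Eccentricity

variable {m : ℕ} {N M : (Fin m → ℝ) → ℝ}

lemma bddAbove_ratio (hN : IsNorm N) (hM : IsNorm M) :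
    BddAbove ((fun x => N x / M x) '' {x | x ≠ 0}) := by
  obtain ⟨C, hC0, hC⟩ := hN.exists_le_mul_norm
  obtain ⟨c, hc0, hc⟩ := hM.exists_mul_norm_le
  refine ⟨C / c, ?_⟩
  rintro _ ⟨x, hx, rfl⟩
  have hxn : 0 < ‖x‖ := norm_pos_iff.mpr hx
  calc N x / M x ≤ C * ‖x‖ / (c * ‖x‖) := div_le_div₀ (by positivity) (hC x) (by positivity) (hc x)
    _ = C / c := mul_div_mul_right _ _ hxn.ne'

lemma bddBelow_ratio (hN : ∀ x, 0 ≤ N x) (hM : ∀ x, 0 ≤ M x) :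
    BddBelow ((fun x => N x / M x) '' {x | x ≠ 0}) :=
  ⟨0, by rintro _ ⟨x, -, rfl⟩; exact div_nonneg (hN x) (hM x)⟩

lemma le_ePlus_mul (hN : IsNorm N) (hM : IsNorm M) (x : Fin m → ℝ) :
    N x ≤ ePlus N M * M x := by
  rcases eq_or_ne x 0 with rfl | hx
  · simp [hN.map_zero, hM.map_zero]
  exact (div_le_iff₀ (hM.pos hx)).mp (le_csSup (bddAbove_ratio hN hM) ⟨x, hx, rfl⟩)

lemma eMinus_mul_le (hN : IsNorm N) (hM : IsNorm M) (x : Fin m → ℝ) :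
    eMinus N M * M x ≤ N x := by
  rcases eq_or_ne x 0 with rfl | hx
  · simp [hN.map_zero, hM.map_zero]
  exact (le_div_iff₀ (hM.pos hx)).mp (csInf_le (bddBelow_ratio hN.1 hM.1) ⟨x, hx, rfl⟩)

lemma ePlus_nonneg (hN : ∀ x, 0 ≤ N x) (hM : ∀ x, 0 ≤ M x) : 0 ≤ ePlus N M :=
  Real.sSup_nonneg <| by rintro _ ⟨x, -, rfl⟩; exact div_nonneg (hN x) (hM x)

lemma ePlus_le (hM : IsNorm M) {c : ℝ} (hc : 0 ≤ c) (h : ∀ x, N x ≤ c * M x) :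
    ePlus N M ≤ c :=
  Real.sSup_le (by rintro _ ⟨x, hx, rfl⟩; exact (div_le_iff₀ (hM.pos hx)).mpr (h x)) hc

lemma nonempty_ne_zero (hm : 1 ≤ m) : {x : Fin m → ℝ | x ≠ 0}.Nonempty :=
  ⟨fun _ => 1, fun h => by simpa using congrFun h ⟨0, hm⟩⟩

lemma le_eMinus (hm : 1 ≤ m) (hM : IsNorm M) {c : ℝ} (h : ∀ x, c * M x ≤ N x) :
    c ≤ eMinus N M :=
  le_csInf ((nonempty_ne_zero hm).image _) <| by
    rintro _ ⟨x, hx, rfl⟩; exact (le_div_iff₀ (hM.pos hx)).mpr (h x)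

lemma eMinus_pos (hm : 1 ≤ m) (hN : IsNorm N) (hM : IsNorm M) : 0 < eMinus N M := by
  obtain ⟨c, hc0, hc⟩ := hN.exists_mul_norm_le
  obtain ⟨C, hC0, hC⟩ := hM.exists_le_mul_norm
  refine lt_of_lt_of_le (by positivity) (le_eMinus hm hM (c := c / (C + 1)) fun x => ?_)
  calc c / (C + 1) * M x ≤ c / (C + 1) * ((C + 1) * ‖x‖) := by
        gcongr
        linarith [hC x, norm_nonneg x]
    _ = c * ‖x‖ := by field_simp
    _ ≤ N x := hc x

end Eccentricity

section Relaxation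

variable {m r : ℕ} (A : Fin r → Matrix (Fin m) (Fin m) ℝ) {N M : (Fin m → ℝ) → ℝ}

lemma maxA_le_mul_of_le_mul {c : ℝ} (hc : 0 ≤ c) (h : ∀ x, N x ≤ c * M x) (x : Fin m → ℝ) :
    maxA A N x ≤ c * maxA A M x := by
  rw [maxA, maxA, Real.mul_iSup_of_nonneg hc]
  exact ciSup_mono (Set.finite_range _).bddAbove fun i => h _

lemma mul_maxA_le_of_mul_le {c : ℝ} (hc : 0 ≤ c) (h : ∀ x, c * M x ≤ N x) (x : Fin m → ℝ) :
    c * maxA A M x ≤ maxA A N x := by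
  rw [maxA, maxA, Real.mul_iSup_of_nonneg hc]
  exact ciSup_mono (Set.finite_range _).bddAbove fun i => h _

variable {ρ γ c : ℝ}

lemma mul_max_one_mul_eq (hc : 0 ≤ c) (hM : ∀ x, 0 ≤ M x) (hbar : ∀ x, ρ * M x = maxA A M x)
    (x : Fin m → ℝ) :
    c * max 1 (γ⁻¹ * ρ) * M x = max (c * M x) (γ⁻¹ * (c * maxA A M x)) := by
  rw [mul_max_of_nonneg _ _ hc, max_mul_of_nonneg _ _ (hM x), ← hbar]
  ring_nf

lemma max_relax_le_mul (hγ : 0 ≤ γ) (hc : 0 ≤ c) (hM : ∀ x, 0 ≤ M x)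
    (hbar : ∀ x, ρ * M x = maxA A M x) (h : ∀ x, N x ≤ c * M x) (x : Fin m → ℝ) :
    max (N x) (γ⁻¹ * maxA A N x) ≤ c * max 1 (γ⁻¹ * ρ) * M x := by
  rw [mul_max_one_mul_eq A hc hM hbar]
  exact max_le_max (h x) (by gcongr; exact maxA_le_mul_of_le_mul A hc h x)

lemma mul_le_max_relax (hγ : 0 ≤ γ) (hc : 0 ≤ c) (hM : ∀ x, 0 ≤ M x)
    (hbar : ∀ x, ρ * M x = maxA A M x) (h : ∀ x, c * M x ≤ N x) (x : Fin m → ℝ) :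
    c * max 1 (γ⁻¹ * ρ) * M x ≤ max (N x) (γ⁻¹ * maxA A N x) := by
  rw [mul_max_one_mul_eq A hc hM hbar]
  exact max_le_max (h x) (by gcongr; exact mul_maxA_le_of_mul_le A hc h x)

end Relaxation

theorem stmt5_general {m r : ℕ} (hm : 2 ≤ m)
    (A : Fin r → Matrix (Fin m) (Fin m) ℝ)
    (Nstar : (Fin m → ℝ) → ℝ) (hNs : IsNorm Nstar)
    (hbar : ∀ x, jsr A * Nstar x = maxA A Nstar x)
    (N : (Fin m → ℝ) → ℝ) (hN : IsNorm N)
    (γ : ℝ) (hγ : 0 < γ)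
    (N' : (Fin m → ℝ) → ℝ) (hN' : ∀ x, N' x = max (N x) (γ⁻¹ * maxA A N x)) :
    ePlus N' Nstar ≤ ePlus N Nstar * max 1 (γ⁻¹ * jsr A) ∧
      eMinus N Nstar * max 1 (γ⁻¹ * jsr A) ≤ eMinus N' Nstar ∧
      ecc N' Nstar ≤ ecc N Nstar := by
  have hm1 : 1 ≤ m := by omega
  set C := max 1 (γ⁻¹ * jsr A)
  have hC : 0 < C := one_pos.trans_le (le_max_left _ _)
  have hP := ePlus_nonneg hN.1 hNs.1
  have hQ := eMinus_pos hm1 hN hNs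
  have hPlus : ePlus N' Nstar ≤ ePlus N Nstar * C :=
    ePlus_le hNs (by positivity) fun x => (hN' x).trans_le <|
      max_relax_le_mul A hγ.le hP hNs.1 hbar (le_ePlus_mul hN hNs) x
  have hMinus : eMinus N Nstar * C ≤ eMinus N' Nstar :=
    le_eMinus hm1 hNs fun x => (hN' x).symm ▸
      mul_le_max_relax A hγ.le hQ.le hNs.1 hbar (eMinus_mul_le hN hNs) x
  refine ⟨hPlus, hMinus, ?_⟩
  calc ecc N' Nstar ≤ ePlus N Nstar * C / (eMinus N Nstar * C) :=
        div_le_div₀ (by positivity) hPlus (by positivity) hMinus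
    _ = ecc N Nstar := mul_div_mul_right _ _ hC.ne'

/-- for a Barabanov norm `‖·‖*`, any norm `N`, `γ > 0` and
`N' x = max (N x) (γ⁻¹ max_i N (A_i x))`, one has
`e⁺(N',‖·‖*) ≤ e⁺(N,‖·‖*)·max{1, γ⁻¹ρ(𝒜)}`, `e⁻(N',‖·‖*) ≥ e⁻(N,‖·‖*)·max{1, γ⁻¹ρ(𝒜)}`,
and consequently `ecc(N',‖·‖*) ≤ ecc(N,‖·‖*)`. -/
theorem stmt5 {m r : ℕ} (hm : 2 ≤ m) (hr : 1 ≤ r)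
    (A : Fin r → Matrix (Fin m) (Fin m) ℝ) (hA : IsIrreducibleFamily A)
    (Nstar : (Fin m → ℝ) → ℝ) (hNs : IsNorm Nstar)
    (hbar : ∀ x, jsr A * Nstar x = maxA A Nstar x)
    (N : (Fin m → ℝ) → ℝ) (hN : IsNorm N)
    (γ : ℝ) (hγ : 0 < γ)
    (N' : (Fin m → ℝ) → ℝ) (hN' : ∀ x, N' x = max (N x) (γ⁻¹ * maxA A N x)) :
    ePlus N' Nstar ≤ ePlus N Nstar * max 1 (γ⁻¹ * jsr A) ∧
      eMinus N Nstar * max 1 (γ⁻¹ * jsr A) ≤ eMinus N' Nstar ∧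
      ecc N' Nstar ≤ ecc N Nstar :=
  stmt5_general hm A Nstar hNs hbar N hN γ hγ N' hN'
end

section
/- Let A_1, …, A_r be real m×m matrices, let N be a norm on ℝ^m, let ρ⁻ and ρ⁺ be real numbers such that ρ⁻·N(x) ≤ max_{1≤i≤r} N(A_i x) ≤ ρ⁺·N(x) for all x ∈ ℝ^m, let γ > 0, and define the norm N′ by N′(x) = max{N(x), γ^{-1} max_{1≤i≤r} N(A_i x)}. Then ρ⁻·N′(x) ≤ max_{1≤i≤r} N′(A_i x) ≤ ρ⁺·N′(x) for all x ∈ ℝ^m. -/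
/- Write `T N := maxA A N`. The operator `T` is monotone, commutes with multiplication by
nonnegative scalars and with pointwise maxima, hence with the relaxation
`R N := max N (γ⁻¹ • T N)`. So for `ρ ≥ 0`, `T N ≤ ρ N` gives
`T (R N) = R (T N) ≤ R (ρ N) = ρ R N`, and `ρ N ≤ T N` gives `ρ R N ≤ T (R N)` in the same way.
A norm forces `ρ⁺ ≥ 0` (as `T N ≥ 0` and `N ≠ 0` somewhere), and a negative `ρ⁻` is harmless
because `N ≤ R N`. -/

open Matrix Filter Topology Bornology Pointwise

section MaxA

variable {m r : ℕ} (A : Fin r → Matrix (Fin m) (Fin m) ℝ)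

theorem maxA_nonneg {f : (Fin m → ℝ) → ℝ} (hf : ∀ y, 0 ≤ f y) (x : Fin m → ℝ) :
    0 ≤ maxA A f x :=
  Real.iSup_nonneg fun _ => hf _

theorem maxA_mono {f g : (Fin m → ℝ) → ℝ} (hfg : ∀ y, f y ≤ g y) (x : Fin m → ℝ) :
    maxA A f x ≤ maxA A g x :=
  ciSup_mono (Set.finite_range _).bddAbove fun _ => hfg _

theorem maxA_const_mul {c : ℝ} (hc : 0 ≤ c) (f : (Fin m → ℝ) → ℝ) (x : Fin m → ℝ) :
    maxA A (fun y => c * f y) x = c * maxA A f x :=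
  (Real.mul_iSup_of_nonneg hc _).symm

theorem maxA_max (f g : (Fin m → ℝ) → ℝ) (x : Fin m → ℝ) :
    maxA A (fun y => max (f y) (g y)) x = max (maxA A f x) (maxA A g x) :=
  ciSup_sup_eq (Set.finite_range _).bddAbove (Set.finite_range _).bddAbove

theorem nonneg_of_maxA_le_mul (hm : 1 ≤ m) {N : (Fin m → ℝ) → ℝ} (hN : IsNorm N) {ρ : ℝ}
    (h : ∀ x, maxA A N x ≤ ρ * N x) : 0 ≤ ρ := by
  have : Nonempty (Fin m) := ⟨⟨0, hm⟩⟩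
  obtain ⟨v, hv⟩ := exists_ne (0 : Fin m → ℝ)
  have hNv : 0 < N v := (hN.1 v).lt_of_ne' fun h0 => hv (hN.2.1 v h0)
  exact nonneg_of_mul_nonneg_left ((maxA_nonneg A hN.1 v).trans (h v)) hNv

end MaxA

section MaxRelax

variable {m r : ℕ} (A : Fin r → Matrix (Fin m) (Fin m) ℝ) {γ : ℝ}

noncomputable def maxRelax (γ : ℝ) (N : (Fin m → ℝ) → ℝ) (x : Fin m → ℝ) : ℝ :=
  max (N x) (γ⁻¹ * maxA A N x)

theorem maxA_maxRelax (hγ : 0 ≤ γ) (N : (Fin m → ℝ) → ℝ) (x : Fin m → ℝ) :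
    maxA A (maxRelax A γ N) x = maxRelax A γ (maxA A N) x := by
  unfold maxRelax
  rw [maxA_max, maxA_const_mul A (inv_nonneg.2 hγ)]

theorem const_mul_maxRelax {c : ℝ} (hc : 0 ≤ c) (N : (Fin m → ℝ) → ℝ) (x : Fin m → ℝ) :
    c * maxRelax A γ N x = maxRelax A γ (fun y => c * N y) x := by
  unfold maxRelax
  rw [mul_max_of_nonneg _ _ hc, maxA_const_mul A hc, mul_left_comm]

theorem maxRelax_mono (hγ : 0 ≤ γ) {f g : (Fin m → ℝ) → ℝ} (hfg : ∀ y, f y ≤ g y)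
    (x : Fin m → ℝ) : maxRelax A γ f x ≤ maxRelax A γ g x :=
  max_le_max (hfg x) (mul_le_mul_of_nonneg_left (maxA_mono A hfg x) (inv_nonneg.2 hγ))

theorem maxA_maxRelax_le (hγ : 0 ≤ γ) {N : (Fin m → ℝ) → ℝ} {ρ : ℝ} (hρ : 0 ≤ ρ)
    (h : ∀ x, maxA A N x ≤ ρ * N x) (x : Fin m → ℝ) :
    maxA A (maxRelax A γ N) x ≤ ρ * maxRelax A γ N x := by
  rw [maxA_maxRelax A hγ, const_mul_maxRelax A hρ]
  exact maxRelax_mono A hγ h x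

theorem le_maxA_maxRelax (hγ : 0 ≤ γ) {N : (Fin m → ℝ) → ℝ} {ρ : ℝ}
    (h : ∀ x, ρ * N x ≤ maxA A N x) (x : Fin m → ℝ) :
    ρ * maxRelax A γ N x ≤ maxA A (maxRelax A γ N) x := by
  rcases le_total 0 ρ with hρ | hρ
  · rw [maxA_maxRelax A hγ, const_mul_maxRelax A hρ]
    exact maxRelax_mono A hγ h x
  · calc ρ * maxRelax A γ N x ≤ ρ * N x := mul_le_mul_of_nonpos_left (le_max_left _ _) hρ
      _ ≤ maxA A N x := h x
      _ ≤ maxA A (maxRelax A γ N) x := maxA_mono A (fun _ => le_max_left _ _) x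

end MaxRelax

theorem stmt10_general {m r : ℕ} (hm : 1 ≤ m)
    (A : Fin r → Matrix (Fin m) (Fin m) ℝ)
    (N : (Fin m → ℝ) → ℝ) (hN : IsNorm N) (ρminus ρplus : ℝ)
    (h : ∀ x, ρminus * N x ≤ maxA A N x ∧ maxA A N x ≤ ρplus * N x)
    (γ : ℝ) (hγ : 0 < γ)
    (N' : (Fin m → ℝ) → ℝ) (hN' : ∀ x, N' x = max (N x) (γ⁻¹ * maxA A N x)) :
    ∀ x, ρminus * N' x ≤ maxA A N' x ∧ maxA A N' x ≤ ρplus * N' x := by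
  obtain rfl : N' = maxRelax A γ N := funext hN'
  have hρplus : 0 ≤ ρplus := nonneg_of_maxA_le_mul A hm hN fun x => (h x).2
  exact fun x => ⟨le_maxA_maxRelax A hγ.le (fun y => (h y).1) x,
    maxA_maxRelax_le A hγ.le hρplus (fun y => (h y).2) x⟩

/-- if `ρ⁻ N x ≤ max_i N (A_i x) ≤ ρ⁺ N x` for all `x` and
`N' x = max (N x) (γ⁻¹ max_i N (A_i x))` for some `γ > 0`, then also
`ρ⁻ N' x ≤ max_i N' (A_i x) ≤ ρ⁺ N' x` for all `x`. -/
theorem stmt10 {m r : ℕ} (hm : 1 ≤ m) (hr : 1 ≤ r)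
    (A : Fin r → Matrix (Fin m) (Fin m) ℝ)
    (N : (Fin m → ℝ) → ℝ) (hN : IsNorm N) (ρminus ρplus : ℝ)
    (h : ∀ x, ρminus * N x ≤ maxA A N x ∧ maxA A N x ≤ ρplus * N x)
    (γ : ℝ) (hγ : 0 < γ)
    (N' : (Fin m → ℝ) → ℝ) (hN' : ∀ x, N' x = max (N x) (γ⁻¹ * maxA A N x)) :
    ∀ x, ρminus * N' x ≤ maxA A N' x ∧ maxA A N' x ≤ ρplus * N' x :=
  stmt10_general hm A N hN ρminus ρplus h γ hγ N' hN'
end
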